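/- arXiv:2503.23349 — 3 statements merged into one kernel-verified Lean document; each statement's English description precedes it below -/
import Mathlib

section
/- For every real number r ≥ 1, there exists a Dirichlet series f(s) = ∑_{n=1}^∞ a_n n^{-s} with positive multiplicative coefficients (i.e., a_{mn} = a_m a_n whenever gcd(m,n) = 1) such that σ_a(f) − δ_a(f) = r. -/
open scoped BigOperators Classical

noncomputable section

/-- Greatest prime factor of `n`, with the convention `gpf 1 = 1`. -/
def gpf (n : ℕ) : ℕ := if n = 1 then 1 else n.primeFactors.sup id

/-- `nthPrime n` is the `(n+1)`-st prime number `p_{n+1}`, so `nthPrime 0 = 2`. -/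
def nthPrime (n : ℕ) : ℕ := Nat.nth Nat.Prime n

/-- The coefficient sequence `a` restricted to `p`-smooth indices
(indices whose greatest prime factor is at most `p`). -/
def smoothCoeff (p : ℕ) (a : ℕ → ℝ) : ℕ → ℝ := fun j => if gpf j ≤ p then a j else 0

/-- Abscissa of absolute convergence of the Dirichlet series `∑_{n ≥ 1} a n * n ^ (-s)`,
as an extended real number. -/
def sigmaA (a : ℕ → ℝ) : EReal :=
  sInf {x : EReal | ∃ σ : ℝ, x = (σ : EReal) ∧
    Summable fun n : ℕ => a (n + 1) * ((n + 1 : ℕ) : ℝ) ^ (-σ)}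

/-- The abscissa `δ_a` of the Dirichlet series `∑_{n ≥ 1} a n * n ^ (-s)`:
the infimum of those `σ` for which every subseries supported on `p_n`-smooth
indices converges (absolutely). -/
def deltaA (a : ℕ → ℝ) : EReal :=
  sInf {x : EReal | ∃ σ : ℝ, x = (σ : EReal) ∧ ∀ n : ℕ,
    Summable fun j : ℕ => smoothCoeff (nthPrime n) a (j + 1) * ((j + 1 : ℕ) : ℝ) ^ (-σ)}
/-!
Take `a n = rad(n) ^ (r - 1)`. At a prime `q` the term `a q * q ^ (-σ)` is `q ^ (r - 1 - σ)`,
so the full series diverges for `σ ≤ r` by the divergence of `∑ 1 / q`, while `rad n ≤ n`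
makes it converge for `σ > r`; hence `σ_a = r`. On `p`-smooth indices the series is an
Euler product over the finitely many primes `q ≤ p`, whose factor
`1 + q ^ (r - 1) ∑_{k ≥ 1} q ^ (-kσ)` is finite exactly when `σ > 0`; for `σ ≤ 0` already
the terms at powers of `2` stay above `2 ^ (r - 1)`. Hence `δ_a = 0`.
-/

open UniqueFactorizationMonoid

lemma EReal.sInf_setOf_coe_eq {P : ℝ → Prop} {c : ℝ} (hP : ∀ σ, P σ ↔ c < σ) :
    sInf {x : EReal | ∃ σ : ℝ, x = σ ∧ P σ} = c := by
  refine le_antisymm (le_of_forall_gt fun y hy => ?_) (le_sInf ?_)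
  · obtain ⟨z, hcz, hzy⟩ := EReal.exists_between_coe_real hy
    exact (sInf_le (s := {x : EReal | ∃ σ : ℝ, x = σ ∧ P σ})
      ⟨z, rfl, (hP z).2 (EReal.coe_lt_coe_iff.1 hcz)⟩).trans_lt hzy
  · rintro _ ⟨σ, rfl, hσ⟩
    exact EReal.coe_le_coe_iff.2 ((hP σ).1 hσ).le

lemma le_gpf {n q : ℕ} (hq : q ∈ n.primeFactors) : q ≤ gpf n := by
  have hn : n ≠ 1 := by rintro rfl; simp at hq
  rw [gpf, if_neg hn]
  exact Finset.le_sup (f := id) hq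

lemma mem_smoothNumbers_of_gpf_le {n p : ℕ} (hn : n ≠ 0) (h : gpf n ≤ p) :
    n ∈ Nat.smoothNumbers (p + 1) :=
  Nat.mem_smoothNumbers_of_primeFactors_subset hn fun _ hq =>
    Finset.mem_range.2 (Nat.lt_succ_of_le ((le_gpf hq).trans h))

lemma gpf_prime_pow {q k : ℕ} (hq : q.Prime) (hk : k ≠ 0) : gpf (q ^ k) = q := by
  rw [gpf, if_neg (Nat.one_lt_pow hk hq.one_lt).ne', Nat.primeFactors_pow _ hk,
    hq.primeFactors, Finset.sup_singleton, id]

lemma summable_smoothCoeff_mul_rpow {a : ℕ → ℝ} {σ : ℝ} (ha₁ : a 1 = 1)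
    (hmul : ∀ m n : ℕ, 1 ≤ m → 1 ≤ n → Nat.Coprime m n → a (m * n) = a m * a n)
    (hprime : ∀ q : ℕ, q.Prime → Summable fun k : ℕ => ‖a (q ^ k) * ((q ^ k : ℕ) : ℝ) ^ (-σ)‖)
    (p : ℕ) :
    Summable fun j : ℕ => smoothCoeff p a (j + 1) * ((j + 1 : ℕ) : ℝ) ^ (-σ) := by
  set f : ℕ → ℝ := fun n => a n * (n : ℝ) ^ (-σ)
  have hf₁ : f 1 = 1 := by simp [f, ha₁]
  have hfmul : ∀ {m n : ℕ}, Nat.Coprime m n → f (m * n) = f m * f n := by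
    intro m n hmn
    rcases Nat.eq_zero_or_pos m with rfl | hm
    · rw [(Nat.coprime_zero_left n).1 hmn, mul_one, hf₁, mul_one]
    rcases Nat.eq_zero_or_pos n with rfl | hn
    · rw [(Nat.coprime_zero_right m).1 hmn, one_mul, hf₁, one_mul]
    simp only [f, hmul m n hm hn hmn, Nat.cast_mul,
      Real.mul_rpow (Nat.cast_nonneg m) (Nat.cast_nonneg n)]
    ring
  have hsmooth : Summable ((Nat.smoothNumbers (p + 1)).indicator fun n => ‖f n‖) :=
    summable_subtype_iff_indicator.1
      (EulerProduct.summable_and_hasSum_smoothNumbers_prod_primesBelow_tsum hf₁ hfmul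
        (hprime _ ·) (p + 1)).1
  refine Summable.of_norm_bounded ((summable_nat_add_iff 1).2 hsmooth) fun j => ?_
  by_cases h : gpf (j + 1) ≤ p
  · rw [Set.indicator_of_mem (mem_smoothNumbers_of_gpf_le j.succ_ne_zero h), smoothCoeff,
      if_pos h]
  · simp only [smoothCoeff, if_neg h, zero_mul, norm_zero]
    exact Set.indicator_nonneg (fun _ _ => norm_nonneg _) _

def radicalPow (e : ℝ) (n : ℕ) : ℝ := ((radical n : ℕ) : ℝ) ^ e

lemma radicalPow_pos (e : ℝ) (n : ℕ) : 0 < radicalPow e n :=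
  Real.rpow_pos_of_pos (Nat.cast_pos.2 (Nat.radical_pos n)) e

lemma radicalPow_one (e : ℝ) : radicalPow e 1 = 1 := by
  simp [radicalPow]

lemma radicalPow_mul (e : ℝ) {m n : ℕ} (h : Nat.Coprime m n) :
    radicalPow e (m * n) = radicalPow e m * radicalPow e n := by
  rw [radicalPow, radical_mul (Nat.coprime_iff_isRelPrime.1 h), Nat.cast_mul,
    Real.mul_rpow (Nat.cast_nonneg _) (Nat.cast_nonneg _), radicalPow, radicalPow]

lemma radicalPow_prime_pow (e : ℝ) {q k : ℕ} (hq : q.Prime) (hk : k ≠ 0) :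
    radicalPow e (q ^ k) = (q : ℝ) ^ e := by
  rw [radicalPow, radical_pow_of_prime hq.prime hk, normalize_eq]

lemma radicalPow_prime (e : ℝ) {q : ℕ} (hq : q.Prime) : radicalPow e q = (q : ℝ) ^ e := by
  simpa using radicalPow_prime_pow e hq one_ne_zero

lemma radicalPow_le_rpow {e : ℝ} (he : 0 ≤ e) {n : ℕ} (hn : n ≠ 0) :
    radicalPow e n ≤ (n : ℝ) ^ e :=
  Real.rpow_le_rpow (Nat.cast_nonneg _) (Nat.cast_le.2 (Nat.radical_le_self_iff.2 hn)) he

lemma summable_radicalPow_mul_rpow {e σ : ℝ} (he : 0 ≤ e) (hσ : e + 1 < σ) :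
    Summable fun n : ℕ => radicalPow e (n + 1) * ((n + 1 : ℕ) : ℝ) ^ (-σ) := by
  have hdom : Summable fun n : ℕ => ((n + 1 : ℕ) : ℝ) ^ (e - σ) :=
    (summable_nat_add_iff 1).2 (Real.summable_nat_rpow.2 (by linarith))
  refine Summable.of_nonneg_of_le (fun n => ?_) (fun n => ?_) hdom
  · exact mul_nonneg (radicalPow_pos e _).le (Real.rpow_nonneg (Nat.cast_nonneg _) _)
  · calc radicalPow e (n + 1) * ((n + 1 : ℕ) : ℝ) ^ (-σ)
        ≤ ((n + 1 : ℕ) : ℝ) ^ e * ((n + 1 : ℕ) : ℝ) ^ (-σ) := by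
          gcongr
          exact radicalPow_le_rpow he n.succ_ne_zero
      _ = ((n + 1 : ℕ) : ℝ) ^ (e - σ) := by
          rw [← Real.rpow_add (Nat.cast_pos.2 n.succ_pos), sub_eq_add_neg]

lemma not_summable_radicalPow_mul_rpow {e σ : ℝ} (hσ : σ ≤ e + 1) :
    ¬ Summable fun n : ℕ => radicalPow e (n + 1) * ((n + 1 : ℕ) : ℝ) ^ (-σ) := by
  intro h
  replace h := (summable_nat_add_iff (f := fun n : ℕ => radicalPow e n * (n : ℝ) ^ (-σ)) 1).1 h
  refine not_summable_one_div_on_primes (h.of_nonneg_of_le (fun n => ?_) fun n => ?_)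
  · exact Set.indicator_nonneg (fun _ _ => by positivity) n
  by_cases hn : n.Prime
  · have hn₀ : (0 : ℝ) < n := Nat.cast_pos.2 hn.pos
    rw [Set.indicator_of_mem (show n ∈ {p | Nat.Prime p} from hn), radicalPow_prime e hn,
      ← Real.rpow_add hn₀, one_div, ← Real.rpow_neg_one]
    exact Real.rpow_le_rpow_of_exponent_le (Nat.one_le_cast.2 hn.one_lt.le) (by linarith)
  · rw [Set.indicator_of_notMem (show n ∉ {p | Nat.Prime p} from hn)]
    exact mul_nonneg (radicalPow_pos e _).le (Real.rpow_nonneg (Nat.cast_nonneg _) _)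

lemma sigmaA_radicalPow {e : ℝ} (he : 0 ≤ e) : sigmaA (radicalPow e) = ((e + 1 : ℝ) : EReal) :=
  EReal.sInf_setOf_coe_eq fun _ =>
    ⟨fun h => not_le.1 fun hσ => not_summable_radicalPow_mul_rpow hσ h,
      summable_radicalPow_mul_rpow he⟩

lemma summable_norm_radicalPow_prime_pow_mul_rpow (e : ℝ) {σ : ℝ} (hσ : 0 < σ) {q : ℕ}
    (hq : q.Prime) :
    Summable fun k : ℕ => ‖radicalPow e (q ^ k) * ((q ^ k : ℕ) : ℝ) ^ (-σ)‖ := by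
  have hq₀ : (0 : ℝ) ≤ q := Nat.cast_nonneg q
  have hratio : (q : ℝ) ^ (-σ) < 1 :=
    Real.rpow_lt_one_of_one_lt_of_neg (Nat.one_lt_cast.2 hq.one_lt) (neg_neg_of_pos hσ)
  have hgeom := (summable_geometric_of_lt_one (Real.rpow_nonneg hq₀ _) hratio).mul_left
    ((q : ℝ) ^ e * (q : ℝ) ^ (-σ))
  refine (summable_nat_add_iff 1).1 (hgeom.congr fun k => ?_)
  rw [radicalPow_prime_pow e hq k.succ_ne_zero, Nat.cast_pow, ← Real.rpow_pow_comm hq₀,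
    Real.norm_of_nonneg (by positivity), pow_succ]
  ring

lemma not_summable_smoothCoeff_radicalPow_mul_rpow (e : ℝ) {σ : ℝ} (hσ : σ ≤ 0) {p : ℕ}
    (hp : 2 ≤ p) :
    ¬ Summable fun j : ℕ => smoothCoeff p (radicalPow e) (j + 1) * ((j + 1 : ℕ) : ℝ) ^ (-σ) := by
  intro h
  -- restrict to the indices `2 ^ (k + 1)`, where every term is at least `2 ^ e`
  replace h := ((summable_nat_add_iff
    (f := fun n : ℕ => smoothCoeff p (radicalPow e) n * (n : ℝ) ^ (-σ)) 1).1 h).comp_injective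
    ((Nat.pow_right_injective le_rfl).comp (add_left_injective 1))
  have hconst : Summable fun _ : ℕ => (2 : ℝ) ^ e := by
    refine h.of_nonneg_of_le (fun _ => by positivity) fun k => ?_
    have hgpf : gpf (2 ^ (k + 1)) ≤ p := by
      rwa [gpf_prime_pow Nat.prime_two k.succ_ne_zero]
    simp only [Function.comp_apply, smoothCoeff, if_pos hgpf,
      radicalPow_prime_pow e Nat.prime_two k.succ_ne_zero]
    refine le_mul_of_one_le_right (by positivity) (Real.one_le_rpow ?_ (by linarith))
    exact_mod_cast Nat.one_le_two_pow
  exact (Real.rpow_pos_of_pos two_pos e).ne' ((summable_const_iff _).1 hconst)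

lemma deltaA_radicalPow (e : ℝ) : deltaA (radicalPow e) = 0 := by
  refine (EReal.sInf_setOf_coe_eq fun σ => ⟨fun h => ?_, fun hσ n => ?_⟩).trans EReal.coe_zero
  · exact not_le.1 fun hσ =>
      not_summable_smoothCoeff_radicalPow_mul_rpow e hσ (Nat.prime_nth_prime 0).two_le (h 0)
  · exact summable_smoothCoeff_mul_rpow (radicalPow_one e)
      (fun m n _ _ hmn => radicalPow_mul e hmn)
      (fun q hq => summable_norm_radicalPow_prime_pow_mul_rpow e hσ hq) _

/-- For every real `r ≥ 1` there is a Dirichlet series with positive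
multiplicative coefficients (`a (m*n) = a m * a n` whenever `gcd m n = 1`), convergent
in some right half-plane, such that `σ_a(f) - δ_a(f) = r`. -/
theorem statement1 (r : ℝ) (hr : 1 ≤ r) :
    ∃ a : ℕ → ℝ, (∀ n : ℕ, 1 ≤ n → 0 < a n) ∧
      (∀ m n : ℕ, 1 ≤ m → 1 ≤ n → Nat.Coprime m n → a (m * n) = a m * a n) ∧
      (∃ σ : ℝ, Summable fun n : ℕ => a (n + 1) * ((n + 1 : ℕ) : ℝ) ^ (-σ)) ∧
      sigmaA a - deltaA a = (r : EReal) := by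
  have he : 0 ≤ r - 1 := sub_nonneg.2 hr
  refine ⟨radicalPow (r - 1), fun n _ => radicalPow_pos _ n,
    fun m n _ _ hmn => radicalPow_mul _ hmn,
    ⟨r + 1, summable_radicalPow_mul_rpow he (by linarith)⟩, ?_⟩
  rw [sigmaA_radicalPow he, deltaA_radicalPow, sub_zero, sub_add_cancel]
end
end

section
/- Let g(s) = ∑_{n=2}^∞ b_n n^{-s} with b_n > 0 for all n ≥ 2, let α > 0 and ρ ∈ (σ_a(g), ∞) with g(ρ) = α, and for n ≥ 1 let g_n(s) = ∑_{j ≥ 2, gpf(j) ≤ p_n} b_j j^{-s}. Suppose that for every n there exists ρ_n with g_n(ρ_n) = α. Then the sequence {ρ_n} is increasing, ρ_n ≤ ρ for all sufficiently large n, and ρ_n → ρ as n → ∞. -/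
/-!
All coefficients are nonnegative and the coefficient of `2 ^ (-s)` is positive, so the sum
strictly increases when `s` strictly decreases and does not decrease when coefficients are
enlarged. Hence `g_n(ρ_n) = α = g_{n+1}(ρ_{n+1})` forces `ρ_n ≤ ρ_{n+1}`, and
`g_n(ρ_n) = α = g(ρ)` forces `ρ_n ≤ ρ`. The limit `L = sup ρ_n` satisfies `g_n(L) ≤ α` for
every `n`; as every index `j ≤ n` is `p_n`-smooth, the partial sums of `g(L)` are bounded by
`α`, so `g(L) ≤ α = g(ρ)` and `ρ ≤ L`.
-/

open scoped BigOperators Classical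

noncomputable section

lemma gpf_le_self (n : ℕ) : gpf n ≤ n := by
  unfold gpf
  split_ifs with h
  · exact h.ge
  · rcases n.eq_zero_or_pos with rfl | hn
    · simp
    · exact Finset.sup_le fun p hp => Nat.le_of_dvd hn (Nat.dvd_of_mem_primeFactors hp)

lemma nthPrime_two_le (n : ℕ) : 2 ≤ nthPrime n :=
  (Nat.nth_mem_of_infinite Nat.infinite_setOfPred_prime n).two_le

lemma nthPrime_mono : Monotone nthPrime :=
  (Nat.nth_strictMono Nat.infinite_setOfPred_prime).monotone

lemma le_nthPrime (n : ℕ) : n ≤ nthPrime n :=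
  (Nat.nth_strictMono Nat.infinite_setOfPred_prime).le_apply

section smoothCoeff

variable {p q j : ℕ} {a : ℕ → ℝ}

lemma smoothCoeff_of_le (h : j ≤ p) : smoothCoeff p a j = a j :=
  if_pos ((gpf_le_self j).trans h)

lemma smoothCoeff_nonneg (ha : 0 ≤ a j) : 0 ≤ smoothCoeff p a j := by
  unfold smoothCoeff
  split_ifs
  exacts [ha, le_rfl]

lemma smoothCoeff_le (ha : 0 ≤ a j) : smoothCoeff p a j ≤ a j := by
  unfold smoothCoeff
  split_ifs
  exacts [le_rfl, ha]

lemma smoothCoeff_mono (hpq : p ≤ q) (ha : 0 ≤ a j) :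
    smoothCoeff p a j ≤ smoothCoeff q a j := by
  unfold smoothCoeff
  split_ifs with hp hq
  exacts [le_rfl, absurd (hp.trans hpq) hq, ha, le_rfl]

lemma smoothCoeff_nthPrime_two (n : ℕ) : smoothCoeff (nthPrime n) a 2 = a 2 :=
  smoothCoeff_of_le (nthPrime_two_le n)

end smoothCoeff

def dirichletTerm (a : ℕ → ℝ) (σ : ℝ) (j : ℕ) : ℝ := a (j + 1) * ((j + 1 : ℕ) : ℝ) ^ (-σ)

section dirichletTerm

variable {a a' : ℕ → ℝ} {σ τ : ℝ}

lemma dirichletTerm_nonneg (ha : ∀ j, 0 ≤ a (j + 1)) (σ : ℝ) (j : ℕ) :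
    0 ≤ dirichletTerm a σ j :=
  mul_nonneg (ha j) (Real.rpow_nonneg (Nat.cast_nonneg _) _)

lemma dirichletTerm_le_dirichletTerm (ha : ∀ j, 0 ≤ a (j + 1))
    (haa' : ∀ j, a (j + 1) ≤ a' (j + 1)) (hτσ : τ ≤ σ) (j : ℕ) :
    dirichletTerm a σ j ≤ dirichletTerm a' τ j :=
  mul_le_mul (haa' j)
    (Real.rpow_le_rpow_of_exponent_le (by simp) (neg_le_neg hτσ))
    (Real.rpow_nonneg (Nat.cast_nonneg _) _) ((ha j).trans (haa' j))

lemma exists_hasSum_dirichletTerm_le (ha : ∀ j, 0 ≤ a (j + 1))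
    (haa' : ∀ j, a (j + 1) ≤ a' (j + 1)) (hτσ : τ ≤ σ) {x : ℝ}
    (hx : HasSum (dirichletTerm a' τ) x) : ∃ y ≤ x, HasSum (dirichletTerm a σ) y := by
  have hle := dirichletTerm_le_dirichletTerm ha haa' hτσ
  have hs := hx.summable.of_nonneg_of_le (dirichletTerm_nonneg ha σ) hle
  exact ⟨_, hx.tsum_eq ▸ hs.tsum_le_tsum hle hx.summable, hs.hasSum⟩

lemma tsum_dirichletTerm_lt (ha : ∀ j, 0 ≤ a (j + 1)) (haa' : ∀ j, a (j + 1) ≤ a' (j + 1))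
    (ha₂ : 0 < a 2) (hτσ : τ < σ) (hs : Summable (dirichletTerm a' τ)) :
    ∑' j, dirichletTerm a σ j < ∑' j, dirichletTerm a' τ j := by
  have hterm : dirichletTerm a σ 1 < dirichletTerm a' τ 1 :=
    calc a 2 * ((2 : ℕ) : ℝ) ^ (-σ)
        < a 2 * ((2 : ℕ) : ℝ) ^ (-τ) :=
          mul_lt_mul_of_pos_left
            (Real.rpow_lt_rpow_of_exponent_lt (by norm_num) (neg_lt_neg hτσ)) ha₂
      _ ≤ a' 2 * ((2 : ℕ) : ℝ) ^ (-τ) :=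
          mul_le_mul_of_nonneg_right (haa' 1) (Real.rpow_nonneg (Nat.cast_nonneg _) _)
  exact Summable.tsum_lt_tsum_of_nonneg (dirichletTerm_nonneg ha σ)
    (dirichletTerm_le_dirichletTerm ha haa' hτσ.le) hterm hs

lemma le_of_hasSum_dirichletTerm (ha : ∀ j, 0 ≤ a (j + 1))
    (haa' : ∀ j, a (j + 1) ≤ a' (j + 1)) (ha₂ : 0 < a 2) {x y : ℝ}
    (hx : HasSum (dirichletTerm a σ) x) (hy : HasSum (dirichletTerm a' τ) y) (hyx : y ≤ x) :
    σ ≤ τ := by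
  by_contra! hτσ
  have := tsum_dirichletTerm_lt ha haa' ha₂ hτσ hy.summable
  rw [hx.tsum_eq, hy.tsum_eq] at this
  linarith

lemma summable_dirichletTerm_of_sigmaA_lt (ha : ∀ j, 0 ≤ a (j + 1)) (h : sigmaA a < σ) :
    Summable (dirichletTerm a σ) := by
  obtain ⟨_, ⟨τ, rfl, hτ⟩, hτσ⟩ := sInf_lt_iff.mp h
  exact hτ.of_nonneg_of_le (dirichletTerm_nonneg ha σ)
    (dirichletTerm_le_dirichletTerm ha (fun _ => le_rfl) (EReal.coe_le_coe_iff.mp hτσ.le))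

lemma exists_hasSum_dirichletTerm_le_of_smoothCoeff (ha : ∀ j, 0 ≤ a (j + 1)) {C : ℝ}
    (hC : ∀ n, ∃ x ≤ C, HasSum (dirichletTerm (smoothCoeff (nthPrime n) a) σ) x) :
    ∃ y ≤ C, HasSum (dirichletTerm a σ) y := by
  have hpartial (N : ℕ) : ∑ j ∈ Finset.range N, dirichletTerm a σ j ≤ C := by
    obtain ⟨x, hxC, hx⟩ := hC N
    have heq : ∀ j ∈ Finset.range N,
        dirichletTerm a σ j = dirichletTerm (smoothCoeff (nthPrime N) a) σ j := fun j hj => by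
      rw [dirichletTerm, dirichletTerm,
        smoothCoeff_of_le ((Finset.mem_range.mp hj).trans_le (le_nthPrime N))]
    have hnonneg := dirichletTerm_nonneg (fun j => smoothCoeff_nonneg (p := nthPrime N) (ha j)) σ
    rw [Finset.sum_congr rfl heq]
    exact (sum_le_hasSum _ (fun j _ => hnonneg j) hx).trans hxC
  exact ⟨_, Real.tsum_le_of_sum_range_le (dirichletTerm_nonneg ha σ) hpartial,
    (summable_of_sum_range_le (dirichletTerm_nonneg ha σ) hpartial).hasSum⟩

end dirichletTerm

theorem statement10_general (b : ℕ → ℝ) (hb1 : b 1 = 0) (hbpos : ∀ n : ℕ, 2 ≤ n → 0 < b n)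
    (α : ℝ) (ρ : ℝ) (hρ : sigmaA b < (ρ : EReal))
    (hgρ : ∑' n : ℕ, b (n + 1) * ((n + 1 : ℕ) : ℝ) ^ (-ρ) = α)
    (ρseq : ℕ → ℝ)
    (hρseq : ∀ n : ℕ, HasSum
      (fun j : ℕ => smoothCoeff (nthPrime n) b (j + 1) * ((j + 1 : ℕ) : ℝ) ^ (-(ρseq n))) α) :
    Monotone ρseq ∧ (∀ᶠ n in Filter.atTop, ρseq n ≤ ρ) ∧
      Filter.Tendsto ρseq Filter.atTop (nhds ρ) := by
  have hb : ∀ j, 0 ≤ b (j + 1) := by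
    rintro (_ | j)
    · exact hb1.ge
    · exact (hbpos _ (by omega)).le
  have hsb (n j : ℕ) : 0 ≤ smoothCoeff (nthPrime n) b (j + 1) := smoothCoeff_nonneg (hb j)
  have hsb₂ (n : ℕ) : 0 < smoothCoeff (nthPrime n) b 2 :=
    smoothCoeff_nthPrime_two n ▸ hbpos 2 le_rfl
  have hgρ' : HasSum (dirichletTerm b ρ) α :=
    hgρ ▸ (summable_dirichletTerm_of_sigmaA_lt hb hρ).hasSum
  have hle (n : ℕ) : ρseq n ≤ ρ :=
    le_of_hasSum_dirichletTerm (hsb n) (fun j => smoothCoeff_le (hb j)) (hsb₂ n) (hρseq n) hgρ'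
      le_rfl
  have hmono : Monotone ρseq := monotone_nat_of_le_succ fun n =>
    le_of_hasSum_dirichletTerm (hsb n)
      (fun j => smoothCoeff_mono (nthPrime_mono n.le_succ) (hb j)) (hsb₂ n) (hρseq n)
      (hρseq (n + 1)) le_rfl
  have hbdd : BddAbove (Set.range ρseq) := ⟨ρ, Set.forall_mem_range.mpr hle⟩
  obtain ⟨y, hyα, hy⟩ := exists_hasSum_dirichletTerm_le_of_smoothCoeff hb fun n =>
    exists_hasSum_dirichletTerm_le (hsb n) (fun _ => le_rfl) (le_ciSup hbdd n) (hρseq n)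
  have hsup : ⨆ n, ρseq n = ρ := (ciSup_le hle).antisymm
    (le_of_hasSum_dirichletTerm hb (fun _ => le_rfl) (hbpos 2 le_rfl) hgρ' hy hyα)
  exact ⟨hmono, .of_forall hle, hsup ▸ tendsto_atTop_ciSup hmono hbdd⟩

/-- With `g(s) = ∑_{n ≥ 2} b n * n^{-s}` (positive coefficients,
encoded by `b 1 = 0` and `b n > 0` for `n ≥ 2`), `α > 0`, `ρ > σ_a(g)` with `g(ρ) = α`,
and `g_n` the subseries supported on `p_{n+1}`-smooth indices: if for every `n` there is
`ρ_n` with `g_n(ρ_n) = α` (the series converging there, i.e. `HasSum`), then the sequence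
`{ρ_n}` is increasing, `ρ_n ≤ ρ` for all sufficiently large `n`, and `ρ_n → ρ`. -/
theorem statement10 (b : ℕ → ℝ) (hb1 : b 1 = 0) (hbpos : ∀ n : ℕ, 2 ≤ n → 0 < b n)
    (α : ℝ) (hα : 0 < α) (ρ : ℝ) (hρ : sigmaA b < (ρ : EReal))
    (hgρ : ∑' n : ℕ, b (n + 1) * ((n + 1 : ℕ) : ℝ) ^ (-ρ) = α)
    (ρseq : ℕ → ℝ)
    (hρseq : ∀ n : ℕ, HasSum
      (fun j : ℕ => smoothCoeff (nthPrime n) b (j + 1) * ((j + 1 : ℕ) : ℝ) ^ (-(ρseq n))) α) :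
    Monotone ρseq ∧ (∀ᶠ n in Filter.atTop, ρseq n ≤ ρ) ∧
      Filter.Tendsto ρseq Filter.atTop (nhds ρ) :=
  statement10_general b hb1 hbpos α ρ hρ hgρ ρseq hρseq
end
end

section
/- Let r ≥ 1 and let {c_n}_{n≥1} be the multiplicative sequence with c_{p^m} = p^{r−1} for every prime p and integer m ≥ 1. Then the Dirichlet series f(s) = ∑_{n=1}^∞ c_n n^{-s} satisfies σ_a(f) = r. -/
open scoped BigOperators Classical

noncomputable section

/-
The bound `c n ≤ n^(r-1)`, checked on prime powers and propagated by multiplicativity,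
gives convergence for `σ > r`. For `σ ≤ r` the prime terms alone are `p^(r-1-σ) ≥ 1/p`,
and `∑ 1/p` diverges.
-/

open Set

lemma sigmaA_eq_of_summable_iff (a : ℕ → ℝ) (r : ℝ)
    (h : ∀ σ : ℝ, (Summable fun n : ℕ => a (n + 1) * ((n + 1 : ℕ) : ℝ) ^ (-σ)) ↔ r < σ) :
    sigmaA a = (r : EReal) := by
  unfold sigmaA
  apply le_antisymm
  · refine le_of_forall_gt_imp_ge_of_dense fun x hx => ?_
    induction x using EReal.rec with
    | bot => exact absurd hx (EReal.bot_lt_coe r).not_gt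
    | top => exact le_top
    | coe σ => exact sInf_le ⟨σ, rfl, (h σ).2 (EReal.coe_lt_coe_iff.1 hx)⟩
  · refine le_sInf ?_
    rintro x ⟨σ, rfl, hσ⟩
    exact EReal.coe_le_coe_iff.2 ((h σ).1 hσ).le

lemma le_rpow_of_le_rpow_of_prime_pow (c : ℕ → ℝ) (t : ℝ) (hc1 : c 1 ≤ 1)
    (hcnonneg : ∀ n : ℕ, 1 ≤ n → 0 ≤ c n)
    (hcpp : ∀ p k : ℕ, p.Prime → 1 ≤ k → c (p ^ k) ≤ ((p ^ k : ℕ) : ℝ) ^ t)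
    (hcmul : ∀ m n : ℕ, 1 ≤ m → 1 ≤ n → Nat.Coprime m n → c (m * n) = c m * c n) :
    ∀ n : ℕ, 1 ≤ n → c n ≤ (n : ℝ) ^ t := by
  intro n
  induction n using Nat.recOnPosPrimePosCoprime with
  | prime_pow p k hp hk => exact fun _ => hcpp p k hp hk
  | zero => intro h; omega
  | one => intro _; simpa using hc1
  | coprime a b ha hb hab iha ihb =>
    intro _
    calc c (a * b) = c a * c b := hcmul a b ha.le hb.le hab
      _ ≤ (a : ℝ) ^ t * (b : ℝ) ^ t :=
          mul_le_mul (iha ha.le) (ihb hb.le) (hcnonneg b hb.le) (by positivity)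
      _ = ((a * b : ℕ) : ℝ) ^ t := by
          push_cast
          exact (Real.mul_rpow (by positivity) (by positivity)).symm

lemma summable_mul_rpow_neg_of_le_rpow (c : ℕ → ℝ) (t σ : ℝ)
    (hcnonneg : ∀ n : ℕ, 1 ≤ n → 0 ≤ c n) (hc : ∀ n : ℕ, 1 ≤ n → c n ≤ (n : ℝ) ^ t)
    (hσ : t + 1 < σ) :
    Summable fun n : ℕ => c (n + 1) * ((n + 1 : ℕ) : ℝ) ^ (-σ) := by
  have hmajorant : Summable fun n : ℕ => ((n + 1 : ℕ) : ℝ) ^ (t - σ) :=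
    (summable_nat_add_iff 1).mpr (Real.summable_nat_rpow.mpr (by linarith))
  refine hmajorant.of_nonneg_of_le (fun n => ?_) (fun n => ?_)
  · have := hcnonneg (n + 1) (by omega)
    positivity
  · calc c (n + 1) * ((n + 1 : ℕ) : ℝ) ^ (-σ)
        ≤ ((n + 1 : ℕ) : ℝ) ^ t * ((n + 1 : ℕ) : ℝ) ^ (-σ) :=
          mul_le_mul_of_nonneg_right (hc (n + 1) (by omega)) (by positivity)
      _ = ((n + 1 : ℕ) : ℝ) ^ (t - σ) := by
          rw [← Real.rpow_add (by positivity), sub_eq_add_neg]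

lemma not_summable_of_one_div_le_on_primes (a : ℕ → ℝ) (ha : ∀ n : ℕ, 1 ≤ n → 0 ≤ a n)
    (hprime : ∀ p : ℕ, p.Prime → 1 / (p : ℝ) ≤ a p) :
    ¬ Summable fun n : ℕ => a (n + 1) := by
  intro hsum
  refine not_summable_one_div_on_primes ((summable_nat_add_iff 1).mp ?_)
  refine hsum.of_nonneg_of_le (fun n => indicator_nonneg (fun m _ => by positivity) _)
    (fun n => ?_)
  by_cases hp : (n + 1).Prime
  · rw [indicator_of_mem (show n + 1 ∈ {p | p.Prime} from hp)]
    exact hprime (n + 1) hp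
  · rw [indicator_of_notMem (show n + 1 ∉ {p | p.Prime} from hp)]
    exact ha (n + 1) (by omega)

/-- Let `r ≥ 1` and let `c` be the multiplicative sequence of positive
reals with `c (p^m) = p^{r-1}` for every prime `p` and `m ≥ 1`. Then the Dirichlet series
`f(s) = ∑_{n ≥ 1} c n * n^{-s}` satisfies `σ_a(f) = r`. -/
theorem statement12 (r : ℝ) (hr : 1 ≤ r) (c : ℕ → ℝ) (hc1 : c 1 = 1)
    (hcpos : ∀ n : ℕ, 1 ≤ n → 0 < c n)
    (hcpp : ∀ p k : ℕ, p.Prime → 1 ≤ k → c (p ^ k) = (p : ℝ) ^ (r - 1))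
    (hcmul : ∀ m n : ℕ, 1 ≤ m → 1 ≤ n → Nat.Coprime m n → c (m * n) = c m * c n) :
    sigmaA c = (r : EReal) := by
  have hcnonneg : ∀ n : ℕ, 1 ≤ n → 0 ≤ c n := fun n hn => (hcpos n hn).le
  have hbound : ∀ n : ℕ, 1 ≤ n → c n ≤ (n : ℝ) ^ (r - 1) := by
    refine le_rpow_of_le_rpow_of_prime_pow c (r - 1) hc1.le hcnonneg (fun p k hp hk => ?_) hcmul
    rw [hcpp p k hp hk]
    exact Real.rpow_le_rpow (by positivity)
      (by exact_mod_cast Nat.le_self_pow (by omega : k ≠ 0) p) (by linarith)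
  refine sigmaA_eq_of_summable_iff c r fun σ => ⟨fun hsum => ?_, fun hσ =>
    summable_mul_rpow_neg_of_le_rpow c (r - 1) σ hcnonneg hbound (by linarith)⟩
  by_contra! hσ
  refine not_summable_of_one_div_le_on_primes (fun n => c n * (n : ℝ) ^ (-σ))
    (fun n hn => by have := hcnonneg n hn; positivity) (fun p hp => ?_) (by exact_mod_cast hsum)
  have hp1 : (1 : ℝ) ≤ p := by exact_mod_cast hp.one_lt.le
  calc 1 / (p : ℝ) = (p : ℝ) ^ (-1 : ℝ) := by rw [Real.rpow_neg_one, one_div]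
    _ ≤ (p : ℝ) ^ (r - 1 + -σ) := Real.rpow_le_rpow_of_exponent_le hp1 (by linarith)
    _ = c p * (p : ℝ) ^ (-σ) := by
        rw [Real.rpow_add (by linarith), ← hcpp p 1 hp le_rfl, pow_one]
end
end
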